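/- Let n ≥ 2, let r ≡ 2 (mod 4), r ≥ 2, and let π ∈ A_{r,n}. Then ℓ_𝒜(π) = ℓ_F(π) + ℓ_G(p(π)), where ℓ_𝒜 is word length in A_{r,n} with respect to 𝒜, ℓ_F(π) = ℓ_𝒜(π) − ℓ_𝒜(s(p(π))) is the fibral length, and ℓ_G is word length in G_{r/2,n} with respect to its Coxeter-like generators {s_0, …, s_{n−1}}. -/

import Mathlib

/-!
Since the fibral length is defined as `ℓ_𝒜(π) - ℓ_𝒜(s(p(π)))`, the identity says exactly that
`ℓ_𝒜(s(τ)) = ℓ_G(τ)` for every `τ ∈ G_{r/2,n}`.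

For `r ≡ 2 (mod 4)` the number `2` is invertible mod `r/2`, so halving all colours is a
homomorphism `G_{r,n} → G_{r/2,n}`; it maps `𝒜` into `{s₀, …, s_{n-1}}` and is a left inverse of
`s`, whence `ℓ_G(τ) ≤ ℓ_𝒜(s(τ))`. Conversely `s(τ) = z^{inv(|τ|)} D(τ)`, where `D` doubles all
colours (a homomorphism) and `z = s₀^{r/2}` is an involution. Left multiplication by `s_i`,
`i ≥ 1`, flips the parity of `inv(|τ|)`, and a case check shows that `s(s_i τ) s(τ)⁻¹` is always
`a_i` or `a₁⁻¹`, while `s(s₀ τ) = a₀ s(τ)`. Hence words in the `s_i` lift letter by letter to words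
of the same length in `𝒜`.
-/

open Multiplicative

namespace ACP

/-- The action of `Sₙ` on color vectors by permuting coordinates. -/
def permAct (r n : ℕ) : Equiv.Perm (Fin n) →* MulAut (Fin n → Multiplicative (ZMod r)) where
  toFun τ :=
    { toFun := fun z => z ∘ τ.symm
      invFun := fun z => z ∘ τ
      left_inv := fun z => by ext i; simp
      right_inv := fun z => by ext i; simp
      map_mul' := fun z w => rfl }
  map_one' := by ext z i; rfl
  map_mul' a b := by ext z i; rfl

/-- The group of colored permutations `G_{r,n} = ℤ_r ≀ Sₙ`. -/
abbrev G (r n : ℕ) : Type := (Fin n → Multiplicative (ZMod r)) ⋊[permAct r n] Equiv.Perm (Fin n)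

/-- The Coxeter-like generators: `gen r n 0 = s₀` colors the digit 1 by one color,
`gen r n i = sᵢ` (for `1 ≤ i ≤ n-1`) is the adjacent transposition `(i, i+1)`. -/
def gen (r n : ℕ) (i : ℕ) : G r n :=
  if h : 0 < i ∧ i < n then
    ⟨1, Equiv.swap ⟨i - 1, by omega⟩ ⟨i, h.2⟩⟩
  else
    ⟨fun j => if (j : ℕ) = 0 then ofAdd (1 : ZMod r) else 1, 1⟩

def zmod2ToUnits : Multiplicative (ZMod 2) →* ℤˣ where
  toFun z := (-1) ^ (toAdd z).val
  map_one' := rfl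
  map_mul' := by decide

def csumHom (r n : ℕ) (hr : 2 ∣ r) :
    (Fin n → Multiplicative (ZMod r)) →* Multiplicative (ZMod 2) where
  toFun z := ofAdd (∑ i, ZMod.castHom hr (ZMod 2) (toAdd (z i)))
  map_one' := by simp
  map_mul' z w := by
    have h : ∀ i, ZMod.castHom hr (ZMod 2) (toAdd ((z * w) i))
        = ZMod.castHom hr (ZMod 2) (toAdd (z i)) + ZMod.castHom hr (ZMod 2) (toAdd (w i)) :=
      fun i => map_add _ _ _
    simp only [h, Finset.sum_add_distrib, ofAdd_add]

/-- The sign character of `G_{r,n}` (for even `r`): sends every Coxeter-like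
generator `sᵢ` to `-1`. -/
noncomputable def sgn (r n : ℕ) (hr : 2 ∣ r) : G r n →* ℤˣ :=
  SemidirectProduct.lift (zmod2ToUnits.comp (csumHom r n hr)) Equiv.Perm.sign
    (by
      intro g
      refine MonoidHom.ext fun z => ?_
      have h1 : ∀ a x : ℤˣ, a * x * a⁻¹ = x := fun a x => by
        rw [mul_comm a x, mul_inv_cancel_right]
      simp only [MonoidHom.comp_apply, MulEquiv.coe_toMonoidHom, MulAut.conj_apply, h1]
      congr 1
      show csumHom r n hr (z ∘ g.symm) = csumHom r n hr z
      unfold csumHom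
      simp only [MonoidHom.coe_mk, OneHom.coe_mk]
      congr 1
      exact Equiv.sum_comp g.symm fun j => ZMod.castHom hr (ZMod 2) (toAdd (z j)))

/-- The group of alternating colored permutations `A_{r,n}`: the kernel of the sign
character of `G_{r,n}`. -/
noncomputable def Arn (r n : ℕ) (hr : 2 ∣ r) : Subgroup (G r n) := (sgn r n hr).ker

/-- The generators of `A_{r,n}`: `agen r n 0 = a₀ = s₀²` and
`agen r n i = aᵢ = s₀^{r/2} sᵢ` for `i ≥ 1`. -/
def agen (r n : ℕ) (i : ℕ) : G r n :=
  if i = 0 then gen r n 0 ^ 2 else gen r n 0 ^ (r / 2) * gen r n i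

/-- The generating set `𝒜 = {a₀, a₁, a₁⁻¹, a₂, …, a_{n-1}}` of `A_{r,n}`. -/
def Aset (r n : ℕ) : Set (G r n) :=
  {x | ∃ i ≤ n - 1, x = agen r n i} ∪ {(agen r n 1)⁻¹}

/-- The Coxeter-like generating set `{s₀, …, s_{n-1}}` of `G_{r,n}`. -/
def Sset (r n : ℕ) : Set (G r n) := {x | ∃ i < n, x = gen r n i}

/-- Word length of `g` with respect to a generating set `B`. -/
noncomputable def wordLength {H : Type*} [Group H] (B : Set H) (g : H) : ℕ :=
  sInf {k | ∃ w : List H, (∀ x ∈ w, x ∈ B) ∧ w.prod = g ∧ w.length = k}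

/-- The element `a₁² ∈ A_{r,n}`. -/
noncomputable def a1sq (r n : ℕ) (hr : 2 ∣ r) : ↥(Arn r n hr) :=
  ⟨agen r n 1 ^ 2, by rw [Arn, MonoidHom.mem_ker, map_pow]; exact Int.units_sq _⟩

/-- The operator `a ⊘ 2` : the residue mod `r/2` of `a/2` (`a` even) or of
`(a + r/2)/2` (`a` odd). -/
def oslash (r a : ℕ) : ℕ :=
  if a % 2 = 0 then (a / 2) % (r / 2) else ((a + r / 2) / 2) % (r / 2)

/-- `z_i(π)`, the color of digit `i+1` of `π`, as a natural number in `{0, …, r-1}`. -/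
def zval (r n : ℕ) (π : G r n) (i : Fin n) : ℕ := (toAdd (π.left i)).val

/-- `csum(π) = Σ z_i(π)`. -/
def csum (r n : ℕ) (π : G r n) : ℕ := ∑ i, zval r n π i

/-- Rank of the colored letter `b^{[c]}` (with `1 ≤ b ≤ n`, `0 ≤ c ≤ r-1`) in the
length order `n^{[r-1]} < ⋯ < 1^{[1]} < 1 < 2 < ⋯ < n`. -/
def rank (r n : ℕ) (b c : ℕ) : ℕ :=
  if c = 0 then n * (r - 1) + (b - 1) else (n - b) * (r - 1) + (r - 1 - c)

/-- Rank (in the length order) of the letter in position `i` of the window of `π`. -/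
def colRank (r n : ℕ) (π : G r n) (i : Fin n) : ℕ :=
  rank r n ((π.right i : ℕ) + 1) (zval r n π (π.right i))

/-- The inversion number of `π ∈ G_{r,n}` with respect to the length order. -/
noncomputable def inv (r n : ℕ) (π : G r n) : ℕ :=
  Nat.card {p : Fin n × Fin n // p.1 < p.2 ∧ colRank r n π p.2 < colRank r n π p.1}

/-- The ordinary inversion number of a permutation. -/
noncomputable def invPerm (n : ℕ) (τ : Equiv.Perm (Fin n)) : ℕ :=
  Nat.card {p : Fin n × Fin n // p.1 < p.2 ∧ τ p.2 < τ p.1}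

/-- The covering map `p : A_{r,n} → G_{r/2,n}`, `p(z, τ) = ((zᵢ ⊘ 2)ᵢ, τ)`. -/
def pmap (r n : ℕ) (π : G r n) : G (r / 2) n :=
  ⟨fun i => ofAdd ((oslash r (zval r n π i) : ZMod (r / 2))), π.right⟩

/-- The section `s : G_{r/2,n} → A_{r,n}`: doubles all colors (mod `r`), adding `r/2`
to the color of the digit `1` when `inv(|π|)` is odd. -/
noncomputable def smap (r n : ℕ) (π : G (r / 2) n) : G r n :=
  ⟨fun d => ofAdd
      (((2 * zval (r / 2) n π d +
        if (d : ℕ) = 0 ∧ invPerm n π.right % 2 = 1 then r / 2 else 0 : ℕ) : ZMod r)),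
   π.right⟩

/-- `c(π) = Σ_{i : z_i(π) ≠ 0} (i - 1)` (digits are `1`-based). -/
def cstat (r n : ℕ) (π : G r n) : ℕ :=
  ∑ i : Fin n, if zval r n π i ≠ 0 then (i : ℕ) else 0

/-- The number of absolute transparent inversions of `π`. -/
noncomputable def tinv (r n : ℕ) (π : G r n) : ℕ :=
  Nat.card {p : Fin n × Fin n //
    zval r n π p.1 = r / 2 ∧ p.2 < p.1 ∧ π.right⁻¹ p.1 < π.right⁻¹ p.2}

/-- The (digit-indexed) Lehmer code `l_i = #{j : j > i, τ⁻¹(i) > τ⁻¹(j)}`. -/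
noncomputable def lehmer (n : ℕ) (τ : Equiv.Perm (Fin n)) (i : Fin n) : ℕ :=
  Nat.card {j : Fin n // i < j ∧ τ⁻¹ j < τ⁻¹ i}


/-- `μ(π)`: the minimum of `β(ω) + n(ω)` over all factorizations
`ω = b₀ s₀^{i₁} b₁ ⋯ s₀^{i_{k+1}} b_{k+1}` of `π`, where each `b_u` is a word in
`s₁, …, s_{n-1}` only, `n(ω)` is the number of letters `sᵢ` with `i ≠ 0`, and
`β(ω) = Σ_u (i_u ⊘ 2)`. -/
noncomputable def mu (r n : ℕ) (π : G r n) : ℕ :=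
  sInf {m | ∃ (b₀ : List ℕ) (L : List (ℕ × List ℕ)),
    (∀ x ∈ b₀, 1 ≤ x ∧ x ≤ n - 1) ∧
    (∀ q ∈ L, ∀ x ∈ q.2, 1 ≤ x ∧ x ≤ n - 1) ∧
    π = (b₀.map (gen r n)).prod *
        (L.map (fun q => gen r n 0 ^ q.1 * (q.2.map (gen r n)).prod)).prod ∧
    m = (L.map (fun q => oslash r q.1)).sum +
        (b₀.length + (L.map (fun q => q.2.length)).sum)}

/-- The flag-inversion number on `A_{r,n}`:
`finv_A(π) = (r/2)·inv(|π|) + Σᵢ (cᵢ(π) ⊘ 2)` where `cᵢ(π) = r - zᵢ(π⁻¹) (mod r)`. -/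
noncomputable def finvA (r n : ℕ) (π : G r n) : ℕ :=
  (r / 2) * invPerm n π.right + ∑ i, oslash r ((r - zval r n π⁻¹ i) % r)

/-- The number of (colored) right-to-left minima of `π` whose color is not in `{0, r/2}`. -/
noncomputable def rtlMinA (r n : ℕ) (π : G r n) : ℕ :=
  Nat.card {i : Fin n // (∀ j : Fin n, i < j → π.right i < π.right j) ∧
    zval r n π (π.right i) ≠ 0 ∧ zval r n π (π.right i) ≠ r / 2}

/-- The defining relators of the Coxeter-like presentation of `A_{r,n}` on generators
`x₀, …, x_{n-1}`. -/
def rels (r n : ℕ) : Set (FreeGroup (Fin n)) :=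
  {w | ∃ i : Fin n, (i : ℕ) = 0 ∧ w = FreeGroup.of i ^ (r / 2)} ∪
  {w | ∃ i : Fin n, (i : ℕ) = 1 ∧ w = FreeGroup.of i ^ 4} ∪
  {w | ∃ i : Fin n, 2 ≤ (i : ℕ) ∧ w = FreeGroup.of i ^ 2} ∪
  {w | ∃ i j : Fin n, (i : ℕ) ≠ 1 ∧ (j : ℕ) ≠ 1 ∧ (i : ℕ) + 1 < (j : ℕ) ∧
    w = FreeGroup.of i * FreeGroup.of j * (FreeGroup.of i)⁻¹ * (FreeGroup.of j)⁻¹} ∪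
  {w | ∃ i j : Fin n, 1 ≤ (i : ℕ) ∧ (j : ℕ) = (i : ℕ) + 1 ∧
    w = (FreeGroup.of i * FreeGroup.of j) ^ 3} ∪
  {w | ∃ i j : Fin n, (i : ℕ) = 0 ∧ (j : ℕ) = 1 ∧
    w = (FreeGroup.of i * FreeGroup.of j) ^ (2 * r)} ∪
  {w | ∃ i j : Fin n, (i : ℕ) = 0 ∧ (j : ℕ) = 1 ∧
    w = (FreeGroup.of i * (FreeGroup.of j)⁻¹) ^ (2 * r)} ∪
  {w | ∃ i j : Fin n, (i : ℕ) = 0 ∧ (j : ℕ) = 1 ∧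
    w = FreeGroup.of i * FreeGroup.of j ^ 2 * (FreeGroup.of i)⁻¹ * (FreeGroup.of j ^ 2)⁻¹} ∪
  {w | ∃ i j : Fin n, (i : ℕ) = 1 ∧ 2 < (j : ℕ) ∧
    w = FreeGroup.of i * FreeGroup.of j * FreeGroup.of i * (FreeGroup.of j)⁻¹}

section WordLength

variable {H K : Type*} [Group H] [Group K]

theorem exists_lift_word {B : Set H} {C : Set K} (s : K → H) (hs_one : s 1 = 1)
    (hs_mul : ∀ c ∈ C, ∀ y, ∃ b ∈ B, s (c * y) = b * s y) (w : List K) (hw : ∀ x ∈ w, x ∈ C) :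
    ∃ w' : List H, (∀ x ∈ w', x ∈ B) ∧ w'.prod = s w.prod ∧ w'.length = w.length := by
  induction w with
  | nil => exact ⟨[], by simp, by simp [hs_one], rfl⟩
  | cons c w ih =>
    rw [List.forall_mem_cons] at hw
    obtain ⟨w', hw'B, hw'prod, hw'len⟩ := ih hw.2
    obtain ⟨b, hbB, hb⟩ := hs_mul c hw.1 w.prod
    exact ⟨b :: w', List.forall_mem_cons.2 ⟨hbB, hw'B⟩,
      by rw [List.prod_cons, List.prod_cons, hb, hw'prod], by simp [hw'len]⟩

theorem wordLength_section_eq (f : H →* K) {B : Set H} {C : Set K} (hf : ∀ b ∈ B, f b ∈ C)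
    (s : K → H) (hfs : ∀ y, f (s y) = y) (hs_one : s 1 = 1)
    (hs_mul : ∀ c ∈ C, ∀ y, ∃ b ∈ B, s (c * y) = b * s y) (y : K) :
    wordLength B (s y) = wordLength C y := by
  unfold wordLength
  congr 1
  ext k
  constructor
  · rintro ⟨w, hwB, hw, rfl⟩
    refine ⟨w.map f, ?_, by rw [← map_list_prod, hw, hfs], List.length_map f⟩
    simpa using fun b hb => hf b (hwB b hb)
  · rintro ⟨w, hwC, rfl, rfl⟩
    exact exists_lift_word s hs_one hs_mul w hwC

end WordLength

variable {m n r : ℕ}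

@[simp]
theorem permAct_apply (τ : Equiv.Perm (Fin n)) (z : Fin n → Multiplicative (ZMod m)) (j : Fin n) :
    permAct m n τ z j = z (τ.symm j) := rfl

def colorMap {a b : ℕ} (f : ZMod a →+ ZMod b) (n : ℕ) : G a n →* G b n :=
  SemidirectProduct.map ((AddMonoidHom.toMultiplicative f).compLeft (Fin n)) (MonoidHom.id _)
    fun _ => rfl

@[simp]
theorem colorMap_left {a b : ℕ} (f : ZMod a →+ ZMod b) (π : G a n) (i : Fin n) :
    (colorMap f n π).left i = ofAdd (f (toAdd (π.left i))) := rfl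

@[simp]
theorem colorMap_right {a b : ℕ} (f : ZMod a →+ ZMod b) (π : G a n) :
    (colorMap f n π).right = π.right := rfl

theorem gen_zero : gen m n 0 = ⟨fun j => if (j : ℕ) = 0 then ofAdd 1 else 1, 1⟩ :=
  dif_neg (by omega)

theorem gen_zero_pow (c : ℕ) :
    gen m n 0 ^ c = ⟨fun j => if (j : ℕ) = 0 then ofAdd (c : ZMod m) else 1, 1⟩ := by
  induction c with
  | zero => ext j <;> simp
  | succ c ih =>
    rw [pow_succ, ih, gen_zero]
    ext j
    · by_cases hj : (j : ℕ) = 0 <;> simp [hj, ← ofAdd_add]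
    · rfl

theorem gen_zero_pow_self : gen m n 0 ^ m = 1 := by
  rw [gen_zero_pow]
  ext j <;> simp

theorem gen_zero_mul_right (τ : G m n) : (gen m n 0 * τ).right = τ.right := by
  rw [gen_zero]
  exact one_mul τ.right

theorem gen_of_pos {i : ℕ} (hi0 : 0 < i) (hi : i < n) :
    gen m n i = ⟨1, Equiv.swap ⟨i - 1, by omega⟩ ⟨i, hi⟩⟩ :=
  dif_pos ⟨hi0, hi⟩

theorem gen_mul_self {i : ℕ} (hi0 : 0 < i) (hi : i < n) : gen m n i * gen m n i = 1 := by
  rw [gen_of_pos hi0 hi]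
  ext j <;> simp

theorem commute_gen_zero_gen {i : ℕ} (hi2 : 2 ≤ i) (hi : i < n) :
    Commute (gen m n 0) (gen m n i) := by
  rw [gen_zero, gen_of_pos (by omega) hi]
  ext j
  · simp only [SemidirectProduct.mul_left, permAct_apply, Equiv.symm_swap, Equiv.swap_apply_def,
      one_mul]
    split_ifs <;> simp_all [Fin.ext_iff] <;> omega
  · simp

theorem colorMap_gen_of_pos {a b : ℕ} (f : ZMod a →+ ZMod b) {i : ℕ} (hi0 : 0 < i) (hi : i < n) :
    colorMap f n (gen a n i) = gen b n i := by
  rw [gen_of_pos hi0 hi, gen_of_pos hi0 hi]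
  ext j <;> simp

theorem sign_eq_neg_one_pow_invPerm (σ : Equiv.Perm (Fin n)) :
    Equiv.Perm.sign σ = (-1) ^ invPerm n σ := by
  classical
  rw [σ.sign_eq_prod_prod_Iio, invPerm, Nat.card_eq_fintype_card, Fintype.card_subtype,
    ← Finset.prod_const, Finset.prod_filter, Fintype.prod_prod_type_right]
  refine Finset.prod_congr rfl fun j _ => ?_
  rw [← Finset.filter_gt_eq_Iio, Finset.prod_filter]
  refine Finset.prod_congr rfl fun i _ => ?_
  by_cases hij : i < j
  · have hσ : σ i ≠ σ j := σ.injective.ne hij.ne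
    rcases hσ.lt_or_gt with h | h <;> simp [hij, h, h.not_gt]
  · simp [hij]

theorem invPerm_swap_mul_mod_two {a b : Fin n} (hab : a ≠ b) (σ : Equiv.Perm (Fin n)) :
    invPerm n (Equiv.swap a b * σ) % 2 = (invPerm n σ + 1) % 2 := by
  have h : (-1 : ℤˣ) ^ invPerm n (Equiv.swap a b * σ) = (-1) ^ (invPerm n σ + 1) := by
    rw [← sign_eq_neg_one_pow_invPerm, Equiv.Perm.sign_mul, Equiv.Perm.sign_swap hab,
      sign_eq_neg_one_pow_invPerm, pow_succ, neg_one_mul, mul_neg_one]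
  rw [Int.units_pow_eq_pow_mod_two, Int.units_pow_eq_pow_mod_two _ (_ + 1)] at h
  rcases Nat.mod_two_eq_zero_or_one (invPerm n (Equiv.swap a b * σ)) with h1 | h1 <;>
  rcases Nat.mod_two_eq_zero_or_one (invPerm n σ + 1) with h2 | h2 <;>
  simp_all

theorem invPerm_one : invPerm n 1 = 0 :=
  Nat.card_eq_zero.mpr (Or.inl ⟨fun p => lt_asymm p.2.1 p.2.2⟩)

theorem invPerm_gen_mul_mod_two {i : ℕ} (hi0 : 0 < i) (hi : i < n) (τ : G m n) :
    invPerm n (gen m n i * τ).right % 2 = (invPerm n τ.right + 1) % 2 := by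
  rw [gen_of_pos hi0 hi]
  exact invPerm_swap_mul_mod_two (by simp [Fin.ext_iff]; omega) τ.right

def doubleHom (hr : 2 ∣ r) : ZMod (r / 2) →+ ZMod r :=
  ZMod.lift (r / 2) ⟨zmultiplesHom (ZMod r) 2, by
    have h : ((r / 2 * 2 : ℕ) : ZMod r) = 0 := by rw [Nat.div_mul_cancel hr, ZMod.natCast_self]
    rw [zmultiplesHom_apply, natCast_zsmul, nsmul_eq_mul]
    exact_mod_cast h⟩

/-- Inverse to `doubleHom` only when `r / 2` is odd: otherwise `2⁻¹` is a junk value. -/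
def halveHom (hr : 2 ∣ r) : ZMod r →+ ZMod (r / 2) :=
  (AddMonoidHom.mulLeft (2 : ZMod (r / 2))⁻¹).comp
    (ZMod.castHom (Nat.div_dvd_of_dvd hr) (ZMod (r / 2))).toAddMonoidHom

theorem doubleHom_natCast (hr : 2 ∣ r) (v : ℕ) : doubleHom hr v = 2 * v := by
  rw [← Int.cast_natCast, doubleHom, ZMod.lift_coe, zmultiplesHom_apply, zsmul_eq_mul,
    Int.cast_natCast, mul_comm]

theorem doubleHom_apply (hr : 2 ∣ r) [NeZero (r / 2)] (c : ZMod (r / 2)) :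
    doubleHom hr c = 2 * (c.val : ZMod r) := by
  conv_lhs => rw [← ZMod.natCast_zmod_val c]
  exact doubleHom_natCast hr c.val

theorem halveHom_natCast (hr : 2 ∣ r) (a : ℕ) : halveHom hr a = (2 : ZMod (r / 2))⁻¹ * a := by
  simp [halveHom]

theorem two_mul_inv_two (hr : r % 4 = 2) : (2 : ZMod (r / 2)) * 2⁻¹ = 1 := by
  exact_mod_cast ZMod.coe_mul_inv_eq_one 2 (Nat.coprime_two_left.mpr (Nat.odd_iff.mpr (by omega)))

theorem halveHom_doubleHom (hr : r % 4 = 2) (c : ZMod (r / 2)) :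
    halveHom (by omega) (doubleHom (by omega) c) = c := by
  have : NeZero (r / 2) := ⟨by omega⟩
  obtain ⟨v, rfl⟩ := ZMod.natCast_zmod_surjective c
  have h : (2 : ZMod r) * v = ((2 * v : ℕ) : ZMod r) := by push_cast; rfl
  rw [doubleHom_natCast, h, halveHom_natCast, Nat.cast_mul, Nat.cast_ofNat, ← mul_assoc,
    mul_comm _ 2, two_mul_inv_two hr, one_mul]

theorem colorMap_halveHom_gen_zero_pow_half (hr : 2 ∣ r) :
    colorMap (halveHom hr) n (gen r n 0 ^ (r / 2)) = 1 := by
  rw [gen_zero_pow]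
  ext j
  · by_cases hj : (j : ℕ) = 0 <;> simp [hj, halveHom_natCast]
  · rfl

theorem colorMap_doubleHom_gen_zero (hr : 2 ∣ r) :
    colorMap (doubleHom hr) n (gen (r / 2) n 0) = gen r n 0 ^ 2 := by
  rw [gen_zero, gen_zero_pow]
  ext j
  · have h1 : doubleHom hr 1 = 2 := by simpa using doubleHom_natCast hr 1
    by_cases hj : (j : ℕ) = 0 <;> simp [hj, h1]
  · rfl

theorem smap_eq (hr : 2 ∣ r) [NeZero r] (τ : G (r / 2) n) :
    smap r n τ = (gen r n 0 ^ (r / 2)) ^ (invPerm n τ.right % 2) * colorMap (doubleHom hr) n τ := by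
  have : NeZero (r / 2) := ⟨by have := NeZero.ne r; omega⟩
  rw [← pow_mul, gen_zero_pow]
  ext d
  · simp only [smap, zval, SemidirectProduct.mul_left, map_one, MulAut.one_apply, Pi.mul_apply,
      colorMap_left, doubleHom_apply, toAdd_ofAdd]
    by_cases hd : (d : ℕ) = 0 <;>
    rcases Nat.mod_two_eq_zero_or_one (invPerm n τ.right) with hk | hk <;>
    simp [hd, hk, ← ofAdd_add, add_comm]
  · rfl

theorem smap_one (hr : 2 ∣ r) [NeZero r] : smap r n 1 = 1 := by
  rw [smap_eq hr, map_one]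
  simp [invPerm_one]

theorem smap_gen_mul (hr : 2 ∣ r) [NeZero r] {i : ℕ} (hi : i < n) (τ : G (r / 2) n) :
    ∃ a ∈ Aset r n, smap r n (gen (r / 2) n i * τ) = a * smap r n τ := by
  have hz : gen r n 0 ^ (r / 2) * gen r n 0 ^ (r / 2) = 1 := by
    rw [← pow_add, ← two_mul, Nat.mul_div_cancel' hr, gen_zero_pow_self]
  rw [smap_eq hr, smap_eq hr, map_mul]
  rcases Nat.eq_zero_or_pos i with rfl | hi0
  · refine ⟨agen r n 0, Or.inl ⟨0, Nat.zero_le _, rfl⟩, ?_⟩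
    rw [gen_zero_mul_right, colorMap_doubleHom_gen_zero, agen, if_pos rfl, ← mul_assoc,
      ← mul_assoc, ((Commute.pow_pow_self (gen r n 0) _ _).pow_left _).eq]
  rw [invPerm_gen_mul_mod_two hi0 hi, colorMap_gen_of_pos _ hi0 hi]
  rcases Nat.mod_two_eq_zero_or_one (invPerm n τ.right) with hk | hk
  · refine ⟨agen r n i, Or.inl ⟨i, by omega, rfl⟩, ?_⟩
    rw [hk, show (invPerm n τ.right + 1) % 2 = 1 by omega, agen, if_neg hi0.ne', pow_zero,
      pow_one, one_mul, mul_assoc]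
  rw [hk, show (invPerm n τ.right + 1) % 2 = 0 by omega, pow_zero, pow_one, one_mul]
  rcases (show i = 1 ∨ 2 ≤ i by omega) with rfl | hi2
  · refine ⟨(agen r n 1)⁻¹, Or.inr rfl, ?_⟩
    rw [agen, if_neg one_ne_zero, mul_inv_rev, inv_eq_of_mul_eq_one_right (gen_mul_self one_pos hi),
      mul_assoc, inv_mul_cancel_left]
  · refine ⟨agen r n i, Or.inl ⟨i, by omega, rfl⟩, ?_⟩
    rw [agen, if_neg hi0.ne', ((commute_gen_zero_gen hi2 hi).pow_left _).eq, mul_assoc,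
      ← mul_assoc (gen r n 0 ^ (r / 2)), hz, one_mul]

theorem colorMap_halveHom_smap (hr : r % 4 = 2) (τ : G (r / 2) n) :
    colorMap (halveHom (by omega)) n (smap r n τ) = τ := by
  have : NeZero r := ⟨by omega⟩
  rw [smap_eq (by omega), map_mul, map_pow, colorMap_halveHom_gen_zero_pow_half, one_pow, one_mul]
  ext i
  · exact congrArg ofAdd (halveHom_doubleHom hr _)
  · rfl

theorem colorMap_halveHom_agen (hr : r % 4 = 2) {i : ℕ} (hi : i < n) :
    colorMap (halveHom (by omega)) n (agen r n i) = gen (r / 2) n i := by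
  rcases Nat.eq_zero_or_pos i with rfl | hi0
  · rw [agen, if_pos rfl, ← colorMap_doubleHom_gen_zero (by omega)]
    ext j
    · exact congrArg ofAdd (halveHom_doubleHom hr _)
    · rfl
  · rw [agen, if_neg hi0.ne', map_mul, colorMap_halveHom_gen_zero_pow_half, one_mul,
      colorMap_gen_of_pos _ hi0 hi]

theorem colorMap_halveHom_mem_Sset (hr : r % 4 = 2) (hn : 1 < n) {a : G r n}
    (ha : a ∈ Aset r n) : colorMap (halveHom (by omega)) n a ∈ Sset (r / 2) n := by
  rcases ha with ⟨i, hi, rfl⟩ | ha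
  · exact ⟨i, by omega, colorMap_halveHom_agen hr (by omega)⟩
  · rw [Set.mem_singleton_iff.mp ha, map_inv, colorMap_halveHom_agen hr hn]
    exact ⟨1, hn, inv_eq_of_mul_eq_one_right (gen_mul_self one_pos hn)⟩

theorem wordLength_smap (hr : r % 4 = 2) (hn : 1 < n) (τ : G (r / 2) n) :
    wordLength (Aset r n) (smap r n τ) = wordLength (Sset (r / 2) n) τ := by
  have : NeZero r := ⟨by omega⟩
  refine wordLength_section_eq _ (fun a ha => colorMap_halveHom_mem_Sset hr hn ha) (smap r n)
    (colorMap_halveHom_smap hr) (smap_one (by omega)) ?_ τ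
  rintro _ ⟨i, hi, rfl⟩ y
  exact smap_gen_mul (by omega) hi y

end ACP

/-- `ℓ_𝒜(π) = ℓ_F(π) + ℓ_G(p(π))`. -/
theorem length_decomposition (r n : ℕ) (hn : 2 ≤ n) (hr : r % 4 = 2)
    (π : ACP.G r n) :
    (ACP.wordLength (ACP.Aset r n) π : ℤ) =
      ((ACP.wordLength (ACP.Aset r n) π : ℤ) -
        (ACP.wordLength (ACP.Aset r n) (ACP.smap r n (ACP.pmap r n π)) : ℤ)) +
      (ACP.wordLength (ACP.Sset (r / 2) n) (ACP.pmap r n π) : ℤ) := by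
  rw [ACP.wordLength_smap hr hn]
  ring
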